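/- arXiv:math/0407419 — 3 statements merged into one kernel-verified Lean document; each statement's English description precedes it below -/
import Mathlib

section
/- Suppose a word p·w·q in the free *-monoid equals z·z* for some word z, where w is unshrinkable and max(|p|,|q|) < |z| (i.e., w crosses the middle of p·w·q). Then a contradiction follows; hence if p·w·q = z·z* with w unshrinkable, then max(|p|,|q|) ≥ |z|. -/
/-- The involution on words over the alphabet `Fin n ⊕ Fin n`. -/
def wordStar {n : ℕ} (w : List (Fin n ⊕ Fin n)) : List (Fin n ⊕ Fin n) :=
  (w.map Sum.swap).reverse

/-- A word is shrinkable if it has the form `d*·d·t` or `t·d*·d` with `d` nonempty. -/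
def Shrinkable {n : ℕ} (w : List (Fin n ⊕ Fin n)) : Prop :=
  ∃ d t : List (Fin n ⊕ Fin n), d ≠ [] ∧
    (w = wordStar d ++ d ++ t ∨ w = t ++ wordStar d ++ d)

lemma wordStar_append {n : ℕ} (a b : List (Fin n ⊕ Fin n)) :
    wordStar (a ++ b) = wordStar b ++ wordStar a := by
  simp [wordStar]

lemma wordStar_wordStar {n : ℕ} (a : List (Fin n ⊕ Fin n)) :
    wordStar (wordStar a) = a := by
  simp [wordStar, Function.comp]

lemma wordStar_length {n : ℕ} (a : List (Fin n ⊕ Fin n)) :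
    (wordStar a).length = a.length := by
  simp [wordStar]

/-- if `p·w·q = z·z*` with `w` unshrinkable, then `max (|p|, |q|) ≥ |z|`
(an unshrinkable word cannot cross the middle of a positive word). -/
theorem stmt2 {n : ℕ} (p w q z : List (Fin n ⊕ Fin n))
    (hw : ¬ Shrinkable w) (h : p ++ w ++ q = z ++ wordStar z) :
    z.length ≤ max p.length q.length := by
  by_contra hc
  push_neg at hc
  obtain ⟨hp, hq⟩ : p.length < z.length ∧ q.length < z.length := by
    constructor <;> [exact lt_of_le_of_lt (le_max_left _ _) hc;
      exact lt_of_le_of_lt (le_max_right _ _) hc]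
  -- p is a prefix of z
  have hppre : p <+: z := by
    apply List.prefix_of_prefix_length_le (l₂ := z) (l₃ := z ++ wordStar z)
    · rw [← h]; exact ⟨w ++ q, by simp⟩
    · exact ⟨wordStar z, rfl⟩
    · exact hp.le
  obtain ⟨m, hm⟩ := hppre
  -- q is a suffix of wordStar z
  have hqsuf : q <:+ wordStar z := by
    apply List.suffix_of_suffix_length_le (l₂ := wordStar z) (l₃ := z ++ wordStar z)
    · rw [← h]; exact ⟨p ++ w, by simp⟩
    · exact ⟨z, rfl⟩
    · rw [wordStar_length]; exact hq.le
  obtain ⟨s, hs⟩ := hqsuf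
  -- cancel to get w = m ++ s
  have hw' : w = m ++ s := by
    have : p ++ (w ++ q) = p ++ (m ++ (s ++ q)) := by
      have e : p ++ (m ++ (s ++ q)) = (p ++ m) ++ (s ++ q) := by simp
      rw [e, hm, hs]; simpa [List.append_assoc] using h
    have := List.append_cancel_left this
    have : (w) ++ q = (m ++ s) ++ q := by simpa [List.append_assoc] using this
    exact List.append_cancel_right this
  -- z* = wordStar m ++ wordStar p = s ++ q
  have hz : wordStar m ++ wordStar p = s ++ q := by
    rw [← wordStar_append, hm, hs]
  have hmlen : m.length = z.length - p.length := by
    have := congrArg List.length hm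
    simp at this; omega
  have hslen : s.length = z.length - q.length := by
    have := congrArg List.length hs
    rw [wordStar_length] at this
    simp at this; omega
  rcases le_or_gt p.length q.length with hle | hlt
  · -- s is a prefix of wordStar m
    have hspre : s <+: wordStar m := by
      apply List.prefix_of_prefix_length_le (l₃ := wordStar m ++ wordStar p)
      · rw [hz]; exact ⟨q, rfl⟩
      · exact ⟨wordStar p, rfl⟩
      · rw [wordStar_length]; omega
    obtain ⟨r, hr⟩ := hspre
    apply hw
    refine ⟨s, wordStar r, ?_, Or.inr ?_⟩
    · intro hnil; subst hnil; simp at hslen; omega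
    · have hm' : m = wordStar r ++ wordStar s := by
        rw [← wordStar_append, hr, wordStar_wordStar]
      rw [hw', hm', List.append_assoc]
  · -- wordStar m is a prefix of s
    have hmpre : wordStar m <+: s := by
      apply List.prefix_of_prefix_length_le (l₃ := wordStar m ++ wordStar p)
      · exact ⟨wordStar p, rfl⟩
      · rw [hz]; exact ⟨q, rfl⟩
      · rw [wordStar_length]; omega
    obtain ⟨r, hr⟩ := hmpre
    apply hw
    refine ⟨wordStar m, r, ?_, Or.inl ?_⟩
    · intro hnil
      have h0 : m.length = 0 := by
        have := congrArg List.length hnil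
        rwa [wordStar_length] at this
      omega
    · rw [hw', ← hr, wordStar_wordStar, List.append_assoc]
end

section
/- The *-algebra A = ℂ⟨x, x* | x² = 0, x*² = 0⟩ admits a faithful *-representation by bounded operators on a Hilbert space; moreover the representation can be chosen with the generator x represented by an operator of norm at most 1. -/
open scoped InnerProductSpace

/-- The defining relations of `A = ℂ⟨x, x* | x² = 0, x*² = 0⟩`, on the free algebra
on two generators (`true` stands for `x`, `false` for `x*`). -/
def relA : FreeAlgebra ℂ Bool → FreeAlgebra ℂ Bool → Prop :=
  fun a b => (a = FreeAlgebra.ι ℂ true ^ 2 ∨ a = FreeAlgebra.ι ℂ false ^ 2) ∧ b = 0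

/-- The *-algebra `A = ℂ⟨x, x* | x² = 0, x*² = 0⟩`. -/
abbrev AlgA : Type := RingQuot relA

/-- The generator `x` of `A`. -/
noncomputable def genx : AlgA := RingQuot.mkAlgHom ℂ relA (FreeAlgebra.ι ℂ true)

/-- The generator `x*` of `A`. -/
noncomputable def genxstar : AlgA := RingQuot.mkAlgHom ℂ relA (FreeAlgebra.ι ℂ false)

noncomputable section StarRepAux

namespace StarRepAux

abbrev E2 : Type := EuclideanSpace ℂ (Fin 2)
abbrev Hsp : Type := lp (fun _ : ℕ => E2) 2

def ev (k : Fin 2) : E2 := EuclideanSpace.single k 1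

def Mtrue : E2 →L[ℂ] E2 := (EuclideanSpace.proj (1 : Fin 2)).smulRight (ev 0)
def Mfalse : E2 →L[ℂ] E2 := (EuclideanSpace.proj (0 : Fin 2)).smulRight (ev 1)

def mOf (b : Bool) : E2 →L[ℂ] E2 := if b then Mtrue else Mfalse

lemma Mtrue_apply (v : E2) : Mtrue v = v 1 • ev 0 := rfl
lemma Mfalse_apply (v : E2) : Mfalse v = v 0 • ev 1 := rfl

lemma norm_coord_le (v : E2) (i : Fin 2) : ‖v i‖ ≤ ‖v‖ := by
  have := EuclideanSpace.inner_single_left (𝕜 := ℂ) i 1 v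
  calc ‖v i‖ = ‖⟪EuclideanSpace.single i (1:ℂ), v⟫_ℂ‖ := by
        rw [EuclideanSpace.inner_single_left]; simp
    _ ≤ ‖EuclideanSpace.single i (1:ℂ)‖ * ‖v‖ := norm_inner_le_norm _ _
    _ = ‖v‖ := by rw [EuclideanSpace.norm_single]; simp

lemma norm_ev (k : Fin 2) : ‖ev k‖ = 1 := by rw [ev, EuclideanSpace.norm_single, norm_one]

lemma norm_Mtrue_le : ‖Mtrue‖ ≤ 1 := by
  apply ContinuousLinearMap.opNorm_le_bound _ zero_le_one
  intro v
  rw [Mtrue_apply, norm_smul, norm_ev, mul_one, one_mul]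
  exact norm_coord_le v 1

lemma norm_Mfalse_le : ‖Mfalse‖ ≤ 1 := by
  apply ContinuousLinearMap.opNorm_le_bound _ zero_le_one
  intro v
  rw [Mfalse_apply, norm_smul, norm_ev, mul_one, one_mul]
  exact norm_coord_le v 0

lemma norm_mOf_le (b : Bool) : ‖mOf b‖ ≤ 1 := by
  cases b
  · exact norm_Mfalse_le
  · exact norm_Mtrue_le

end StarRepAux
section AlgSide

def wordProd (w : List Bool) : FreeAlgebra ℂ Bool := (w.map (FreeAlgebra.ι ℂ)).prod

lemma wordProd_nil : wordProd [] = 1 := rfl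

lemma wordProd_cons (b : Bool) (w : List Bool) :
    wordProd (b :: w) = FreeAlgebra.ι ℂ b * wordProd w := by
  simp [wordProd]

abbrev Idx := Option (Bool × ℕ)

def altList : Bool → ℕ → List Bool
  | _, 0 => []
  | b, (m+1) => b :: altList (!b) m

def toListI : Idx → List Bool
  | none => []
  | some (b, m) => altList b (m+1)

def lenI : Idx → ℕ
  | none => 0
  | some (_, m) => m + 1

lemma altList_length (b : Bool) (m : ℕ) : (altList b m).length = m := by
  induction m generalizing b with
  | zero => rfl
  | succ m ih => simp [altList, ih]

lemma toListI_length (i : Idx) : (toListI i).length = lenI i := by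
  cases i with
  | none => rfl
  | some p => exact altList_length _ _

def encodeW : List Bool → Idx
  | [] => none
  | b :: r => some (b, r.length)

lemma bool_ne_iff' {a b : Bool} (h : a ≠ b) : b = !a := by
  cases a <;> cases b <;> simp_all

lemma altList_of_chain : ∀ (w : List Bool) (b : Bool), List.Chain' (· ≠ ·) (b :: w) →
    altList b (w.length + 1) = b :: w
  | [], b, _ => rfl
  | c :: r, b, h => by
      unfold List.Chain' at h
      rw [List.isChain_cons_cons] at h
      have hc : c = !b := bool_ne_iff' h.1
      have ih := altList_of_chain r c h.2
      have ih' : altList (!c) r.length = r := by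
        rw [altList] at ih
        exact (List.cons.inj ih).2
      simp only [List.length_cons, altList, ← hc, ih']

lemma toListI_encodeW {w : List Bool} (h : List.Chain' (· ≠ ·) w) :
    toListI (encodeW w) = w := by
  cases w with
  | nil => rfl
  | cons b r => exact altList_of_chain r b h

def embL : (Idx →₀ ℂ) →ₗ[ℂ] FreeAlgebra ℂ Bool :=
  Finsupp.linearCombination ℂ (fun i => wordProd (toListI i))

open Classical in
def NF : FreeAlgebra ℂ Bool →ₗ[ℂ] (Idx →₀ ℂ) :=
  (FreeAlgebra.basisFreeMonoid ℂ Bool).constr ℂ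
    (fun w => if List.Chain' (· ≠ ·) (FreeMonoid.toList w) then
        Finsupp.single (encodeW (FreeMonoid.toList w)) 1 else 0)

lemma basisFreeMonoid_apply (w : FreeMonoid Bool) :
    FreeAlgebra.basisFreeMonoid ℂ Bool w = wordProd (FreeMonoid.toList w) := by
  rw [FreeAlgebra.basisFreeMonoid, Module.Basis.map_apply]
  simp only [Finsupp.coe_basisSingleOne, AlgEquiv.toLinearEquiv_apply]
  change (FreeAlgebra.equivMonoidAlgebraFreeMonoid (R := ℂ) (X := Bool)).symm
    (MonoidAlgebra.single w 1) = _
  rw [FreeAlgebra.equivMonoidAlgebraFreeMonoid]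
  rw [AlgEquiv.ofAlgHom_symm_apply]
  change (MonoidAlgebra.lift ℂ (FreeAlgebra ℂ Bool) (FreeMonoid Bool))
      (FreeMonoid.lift (FreeAlgebra.ι ℂ)) (MonoidAlgebra.single w 1) = _
  rw [MonoidAlgebra.lift_single, one_smul, FreeMonoid.lift_apply]
  rfl

lemma mk_rel_sq (b : Bool) :
    RingQuot.mkAlgHom ℂ relA (FreeAlgebra.ι ℂ b * FreeAlgebra.ι ℂ b) = 0 := by
  have : relA (FreeAlgebra.ι ℂ b ^ 2) 0 := by
    refine ⟨?_, rfl⟩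
    cases b
    · exact Or.inr rfl
    · exact Or.inl rfl
  have h := RingQuot.mkAlgHom_rel ℂ this
  rw [map_zero] at h
  rw [← pow_two]
  exact h

lemma mk_nonalt_zero : ∀ (w : List Bool), ¬ List.Chain' (· ≠ ·) w →
    RingQuot.mkAlgHom ℂ relA (wordProd w) = 0
  | [], h => absurd List.isChain_nil h
  | [b], h => absurd (List.isChain_singleton b) h
  | a :: b :: r, h => by
      unfold List.Chain' at h
      rw [List.isChain_cons_cons] at h
      by_cases hab : a = b
      · subst hab
        rw [wordProd_cons, wordProd_cons, ← mul_assoc, map_mul, mk_rel_sq, zero_mul]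
      · have hc : ¬ List.Chain' (· ≠ ·) (b :: r) := fun hcc => h ⟨hab, hcc⟩
        rw [wordProd_cons, map_mul, mk_nonalt_zero (b :: r) hc, mul_zero]

lemma mk_embL_NF (p : FreeAlgebra ℂ Bool) :
    RingQuot.mkAlgHom ℂ relA (embL (NF p)) = RingQuot.mkAlgHom ℂ relA p := by
  have key : ((RingQuot.mkAlgHom ℂ relA).toLinearMap.comp (embL.comp NF)) =
      (RingQuot.mkAlgHom ℂ relA).toLinearMap := by
    apply (FreeAlgebra.basisFreeMonoid ℂ Bool).ext
    intro w
    simp only [LinearMap.coe_comp, Function.comp_apply, AlgHom.toLinearMap_apply]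
    rw [NF, Module.Basis.constr_basis]
    by_cases hw : List.Chain' (· ≠ ·) (FreeMonoid.toList w)
    · rw [if_pos hw]
      rw [embL, Finsupp.linearCombination_single, one_smul, toListI_encodeW hw,
        basisFreeMonoid_apply]
    · rw [if_neg hw, map_zero, map_zero, basisFreeMonoid_apply]
      exact (mk_nonalt_zero _ hw).symm
  exact DFunLike.congr_fun key p

end AlgSide

open scoped ENNReal NNReal

section Diag
open StarRepAux

variable (A : ℕ → E2 →L[ℂ] E2)

lemma memdiag (hA : ∀ n, ‖A n‖ ≤ 1) (f : Hsp) : Memℓp (fun n => A n (f n)) 2 := by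
  apply memℓp_gen
  have hs := (lp.memℓp f).summable (by norm_num : (0:ℝ) < (2:ℝ≥0∞).toReal)
  refine Summable.of_nonneg_of_le (fun n => Real.rpow_nonneg (norm_nonneg _) _) (fun n => ?_) hs
  apply Real.rpow_le_rpow (norm_nonneg _) ?_ (by norm_num)
  calc ‖A n (f n)‖ ≤ ‖A n‖ * ‖f n‖ := (A n).le_opNorm _
    _ ≤ 1 * ‖f n‖ := mul_le_mul_of_nonneg_right (hA n) (norm_nonneg _)
    _ = ‖f n‖ := one_mul _

def diagPre (hA : ∀ n, ‖A n‖ ≤ 1) : Hsp →ₗ[ℂ] Hsp where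
  toFun f := ⟨fun n => A n (f n), memdiag A hA f⟩
  map_add' f g := by
    ext n
    simp [lp.coeFn_add, Pi.add_apply]
    rfl
  map_smul' c f := by
    ext n
    simp [lp.coeFn_smul, Pi.smul_apply]

lemma diagPre_norm (hA : ∀ n, ‖A n‖ ≤ 1) (f : Hsp) : ‖diagPre A hA f‖ ≤ 1 * ‖f‖ := by
  rw [one_mul]
  have h2 : (0:ℝ) < (2:ℝ≥0∞).toReal := by norm_num
  have hg := lp.norm_rpow_eq_tsum h2 (diagPre A hA f)
  have hf := lp.norm_rpow_eq_tsum h2 f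
  have hle : ‖diagPre A hA f‖ ^ (2:ℝ≥0∞).toReal ≤ ‖f‖ ^ (2:ℝ≥0∞).toReal := by
    rw [hg, hf]
    apply Summable.tsum_le_tsum _ ((lp.memℓp _).summable h2) ((lp.memℓp f).summable h2)
    intro n
    apply Real.rpow_le_rpow (norm_nonneg _) ?_ (le_of_lt h2)
    calc ‖A n (f n)‖ ≤ ‖A n‖ * ‖f n‖ := (A n).le_opNorm _
      _ ≤ 1 * ‖f n‖ := mul_le_mul_of_nonneg_right (hA n) (norm_nonneg _)
      _ = ‖f n‖ := one_mul _
  by_contra hcon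
  push_neg at hcon
  have : ‖f‖ ^ (2:ℝ≥0∞).toReal < ‖diagPre A hA f‖ ^ (2:ℝ≥0∞).toReal :=
    Real.rpow_lt_rpow (norm_nonneg _) hcon h2
  linarith

def diagOp (hA : ∀ n, ‖A n‖ ≤ 1) : Hsp →L[ℂ] Hsp :=
  LinearMap.mkContinuous (diagPre A hA) 1 (diagPre_norm A hA)

lemma norm_diagOp_le (hA : ∀ n, ‖A n‖ ≤ 1) : ‖diagOp A hA‖ ≤ 1 :=
  LinearMap.mkContinuous_norm_le _ zero_le_one _

lemma diagOp_apply_coord (hA : ∀ n, ‖A n‖ ≤ 1) (f : Hsp) (n : ℕ) :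
    (diagOp A hA f) n = A n (f n) := rfl

lemma diagOp_apply_single (hA : ∀ n, ‖A n‖ ≤ 1) (n : ℕ) (v : E2) :
    diagOp A hA (lp.single 2 n v) = lp.single 2 n (A n v) := by
  ext j
  rw [diagOp_apply_coord]
  rcases eq_or_ne j n with rfl | hj
  · rw [lp.single_apply_self, lp.single_apply_self]
  · rw [lp.single_apply_ne _ _ _ hj, lp.single_apply_ne _ _ _ hj, map_zero]

end Diag

open Fin.NatCast
section Rep
open StarRepAux

def tC (n : ℕ) : ℂ := ((n : ℂ) + 1)⁻¹

lemma tC_injective : Function.Injective tC := by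
  intro n m h
  rw [tC, tC] at h
  have h2 : ((n : ℂ) + 1) = ((m : ℂ) + 1) := inv_injective h
  have h3 : ((n : ℂ)) = ((m : ℂ)) := by linear_combination h2
  exact_mod_cast h3

lemma norm_tC_le (n : ℕ) : ‖tC n‖ ≤ 1 := by
  rw [tC]
  rw [norm_inv]
  rw [inv_le_one_iff₀]
  right
  have : ((n : ℂ) + 1) = ((n + 1 : ℕ) : ℂ) := by push_cast; ring
  rw [this, Complex.norm_natCast]
  exact_mod_cast Nat.one_le_iff_ne_zero.mpr (Nat.succ_ne_zero n)

lemma conj_tC (n : ℕ) : (starRingEnd ℂ) (tC n) = tC n := by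
  rw [tC, map_inv₀, map_add, map_one, Complex.conj_natCast]

lemma norm_fam (b : Bool) (n : ℕ) : ‖tC n • mOf b‖ ≤ 1 := by
  refine le_trans (ContinuousLinearMap.opNorm_smul_le _ _) ?_
  calc ‖tC n‖ * ‖mOf b‖ ≤ 1 * 1 :=
    mul_le_mul (norm_tC_le n) (norm_mOf_le b) (norm_nonneg _) zero_le_one
  _ = 1 := one_mul 1

def Xop : Hsp →L[ℂ] Hsp := diagOp (fun n => tC n • Mtrue) (norm_fam true)
def Xst : Hsp →L[ℂ] Hsp := diagOp (fun n => tC n • Mfalse) (norm_fam false)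

def opOf (b : Bool) : Hsp →L[ℂ] Hsp := if b then Xop else Xst

lemma opOf_single (b : Bool) (n : ℕ) (v : E2) :
    opOf b (lp.single 2 n v) = lp.single 2 n (tC n • mOf b v) := by
  cases b
  · exact diagOp_apply_single _ (norm_fam false) n v
  · exact diagOp_apply_single _ (norm_fam true) n v

def piT : FreeAlgebra ℂ Bool →ₐ[ℂ] (Hsp →L[ℂ] Hsp) := FreeAlgebra.lift ℂ opOf

lemma piT_wordProd (w : List Bool) : piT (wordProd w) = (w.map opOf).prod := by
  rw [wordProd, map_list_prod, List.map_map]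
  congr 1
  apply List.map_congr_left
  intro b _
  simp [piT, FreeAlgebra.lift_ι_apply]

lemma prod_opOf_single (w : List Bool) (n : ℕ) (v : E2) :
    ((w.map opOf).prod) (lp.single 2 n v) =
      lp.single 2 n ((tC n ^ w.length) • ((w.map mOf).prod v)) := by
  induction w with
  | nil => simp
  | cons b r ih =>
      simp only [List.map_cons, List.prod_cons, List.length_cons,
        ContinuousLinearMap.mul_apply, ContinuousLinearMap.coe_mul, Function.comp_apply]
      rw [ih, opOf_single]
      congr 1
      rw [map_smul, smul_smul, ← pow_succ']

def rIdx (b : Bool) : Fin 2 := if b then 0 else 1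

lemma mOf_ev_rIdx (b : Bool) : mOf b (ev (rIdx (!b))) = ev (rIdx b) := by
  cases b
  · show Mfalse (ev 0) = ev 1
    rw [Mfalse_apply]
    have : (ev 0 : E2) 0 = 1 := by rw [ev, EuclideanSpace.single_apply]; simp
    rw [this, one_smul]
  · show Mtrue (ev 1) = ev 0
    rw [Mtrue_apply]
    have : (ev 1 : E2) 1 = 1 := by rw [ev, EuclideanSpace.single_apply]; simp
    rw [this, one_smul]

lemma rIdx_not (b : Bool) : rIdx (!b) = rIdx b + 1 := by cases b <;> decide

lemma mOf_alt : ∀ (m : ℕ) (b : Bool) (k : Fin 2),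
    ((altList b (m+1)).map mOf).prod (ev k) =
      if k = rIdx b + ((m+1 : ℕ) : Fin 2) then ev (rIdx b) else 0
  | 0, b, k => by
      simp only [altList, List.map_cons, List.map_nil, List.prod_cons, List.prod_nil, mul_one]
      cases b
      · show Mfalse (ev k) = if k = rIdx false + ((1:ℕ) : Fin 2) then ev (rIdx false) else 0
        rw [Mfalse_apply]
        have hk : (ev k : E2) 0 = if k = 0 then 1 else 0 := by
          rw [ev, EuclideanSpace.single_apply]
          simp [eq_comm]
        rw [hk]
        by_cases h : k = 0
        · rw [if_pos h, if_pos (by rw [h]; decide), one_smul]; rfl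
        · rw [if_neg h, if_neg (by
            intro hc
            apply h
            rw [hc]; decide), zero_smul]
      · show Mtrue (ev k) = if k = rIdx true + ((1:ℕ) : Fin 2) then ev (rIdx true) else 0
        rw [Mtrue_apply]
        have hk : (ev k : E2) 1 = if k = 1 then 1 else 0 := by
          rw [ev, EuclideanSpace.single_apply]
          simp [eq_comm]
        rw [hk]
        by_cases h : k = 1
        · rw [if_pos h, if_pos (by rw [h]; decide), one_smul]; rfl
        · rw [if_neg h, if_neg (by
            intro hc
            apply h
            rw [hc]; decide), zero_smul]
  | (m+1), b, k => by
      have ih := mOf_alt m (!b) k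
      show ((b :: altList (!b) (m+1)).map mOf).prod (ev k) = _
      simp only [List.map_cons, List.prod_cons, ContinuousLinearMap.mul_apply]
      rw [ih]
      have hcond : (k = rIdx (!b) + ((m+1 : ℕ) : Fin 2)) ↔
          (k = rIdx b + ((m+2 : ℕ) : Fin 2)) := by
        have hc2 : ((m+2 : ℕ) : Fin 2) = ((m+1 : ℕ) : Fin 2) + 1 := by
          push_cast
          rw [show ((m : Fin 2) + 1 + 1 : Fin 2) = (m : Fin 2) + (1 + 1) from add_assoc _ _ _,
            show ((1 : Fin 2) + 1 : Fin 2) = 0 from rfl, add_zero]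
        rw [rIdx_not, hc2]
        constructor <;> intro h <;> rw [h] <;> abel
      by_cases h : k = rIdx (!b) + ((m+1 : ℕ) : Fin 2)
      · rw [if_pos h, if_pos (hcond.mp h), mOf_ev_rIdx]
      · rw [if_neg h, if_neg (fun hc => h (hcond.mpr hc)), map_zero]

end Rep

section Inj
open StarRepAux

def condI (i : Idx) (k r : Fin 2) : Bool :=
  match i with
  | none => r == k
  | some (b, m) => (k == rIdx b + ((m+1 : ℕ) : Fin 2)) && (r == rIdx b)

lemma entry_eq (i : Idx) (k r : Fin 2) :
    (((toListI i).map mOf).prod (ev k)) r = if condI i k r then 1 else 0 := by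
  cases i with
  | none =>
      simp only [toListI, List.map_nil, List.prod_nil, ContinuousLinearMap.one_apply]
      rw [ev, EuclideanSpace.single_apply]
      simp [condI]
  | some p =>
      obtain ⟨b, m⟩ := p
      show (((altList b (m+1)).map mOf).prod (ev k)) r = _
      rw [mOf_alt]
      by_cases h : k = rIdx b + ((m+1:ℕ) : Fin 2)
      · rw [if_pos h]
        rw [ev, EuclideanSpace.single_apply]
        simp [condI, h]
      · rw [if_neg h]
        push_cast at h
        simp [condI, h, Nat.cast_add, Nat.cast_one]

def coordL (n : ℕ) (r : Fin 2) : Hsp →ₗ[ℂ] ℂ where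
  toFun f := f n r
  map_add' f g := by simp [lp.coeFn_add]
  map_smul' c f := by simp [lp.coeFn_smul]

lemma coordL_single (n : ℕ) (r : Fin 2) (v : E2) :
    coordL n r (lp.single 2 n v) = v r := by
  show ((lp.single 2 n v : Hsp) : ∀ _ : ℕ, E2) n r = v r
  rw [lp.single_apply_self]

def Phi (n : ℕ) (k r : Fin 2) : (Hsp →L[ℂ] Hsp) →ₗ[ℂ] ℂ where
  toFun A := coordL n r (A (lp.single 2 n (ev k)))
  map_add' A B := by simp
  map_smul' c A := by simp

lemma Phi_word (i : Idx) (n : ℕ) (k r : Fin 2) :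
    Phi n k r (piT (wordProd (toListI i))) =
      tC n ^ lenI i * (if condI i k r then 1 else 0) := by
  show coordL n r (piT (wordProd (toListI i)) (lp.single 2 n (ev k))) = _
  rw [piT_wordProd, prod_opOf_single, coordL_single]
  have : ((tC n ^ (toListI i).length • ((toListI i).map mOf).prod (ev k)) : E2) r =
      tC n ^ (toListI i).length * (((toListI i).map mOf).prod (ev k)) r := rfl
  rw [this, entry_eq, toListI_length]

lemma Phi_piT (c : Idx →₀ ℂ) (n : ℕ) (k r : Fin 2) :
    Phi n k r (piT (embL c)) =
      c.sum fun i a => if condI i k r then a * tC n ^ lenI i else 0 := by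
  rw [embL, Finsupp.linearCombination_apply, map_finsuppSum, map_finsuppSum]
  apply Finsupp.sum_congr
  intro i _
  rw [map_smul, map_smul, Phi_word]
  by_cases h : condI i k r
  · rw [if_pos h, if_pos h]
    simp [mul_comm]
  · rw [if_neg h, if_neg h]
    simp

def Pc (c : Idx →₀ ℂ) (k r : Fin 2) : Polynomial ℂ :=
  c.sum fun i a => if condI i k r then Polynomial.C a * Polynomial.X ^ lenI i else 0

lemma Pc_eval (c : Idx →₀ ℂ) (k r : Fin 2) (n : ℕ) :
    (Pc c k r).eval (tC n) = Phi n k r (piT (embL c)) := by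
  rw [Pc, Finsupp.sum, Polynomial.eval_finset_sum, Phi_piT, Finsupp.sum]
  apply Finset.sum_congr rfl
  intro i _
  by_cases h : condI i k r
  · rw [if_pos h, if_pos h]
    simp
  · rw [if_neg h, if_neg h]
    simp

lemma Pc_coeff (c : Idx →₀ ℂ) (k r : Fin 2) (d : ℕ) :
    (Pc c k r).coeff d =
      ∑ i ∈ c.support, if condI i k r ∧ lenI i = d then c i else 0 := by
  rw [Pc, Finsupp.sum, Polynomial.finset_sum_coeff]
  apply Finset.sum_congr rfl
  intro i _
  by_cases h1 : condI i k r
  · rw [if_pos h1, Polynomial.coeff_C_mul, Polynomial.coeff_X_pow]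
    by_cases h2 : lenI i = d
    · rw [if_pos h2.symm, mul_one, if_pos ⟨h1, h2⟩]
    · rw [if_neg (fun hc => h2 hc.symm), mul_zero, if_neg (fun hc => h2 hc.2)]
  · rw [if_neg h1, Polynomial.coeff_zero, if_neg (fun hc => h1 hc.1)]

lemma rIdx_inj {a b : Bool} (h : rIdx a = rIdx b) : a = b := by
  cases a <;> cases b <;> simp_all [rIdx]

lemma c_eq_zero (c : Idx →₀ ℂ) (h : piT (embL c) = 0) : c = 0 := by
  have hP : ∀ k r : Fin 2, Pc c k r = 0 := by
    intro k r
    apply Polynomial.eq_zero_of_infinite_isRoot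
    apply Set.infinite_of_injective_forall_mem (f := tC) tC_injective
    intro n
    show (Pc c k r).IsRoot (tC n)
    rw [Polynomial.IsRoot, Pc_eval, h, map_zero]
  have key : ∀ (i : Idx) (k r : Fin 2),
      (∀ j ∈ c.support, j ≠ i → ¬(condI j k r = true ∧ lenI j = lenI i)) →
      condI i k r = true → c i = 0 := by
    intro i k r hj hi
    have h1 : (Pc c k r).coeff (lenI i) = 0 := by rw [hP k r, Polynomial.coeff_zero]
    rw [Pc_coeff, Finset.sum_eq_single i] at h1
    · rwa [if_pos ⟨hi, rfl⟩] at h1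
    · intro j hjs hne
      rw [if_neg (hj j hjs hne)]
    · intro hnot
      rw [if_pos ⟨hi, rfl⟩]
      exact Finsupp.notMem_support_iff.mp hnot
  ext i
  rw [Finsupp.coe_zero, Pi.zero_apply]
  cases i with
  | none =>
      apply key none 0 0 ?_ (by rfl)
      intro j hjs hne hcond
      cases j with
      | none => exact hne rfl
      | some p => exact Nat.succ_ne_zero p.2 hcond.2
  | some p =>
      obtain ⟨b, m⟩ := p
      apply key (some (b, m)) (rIdx b + ((m+1 : ℕ) : Fin 2)) (rIdx b) ?_ ?_
      · intro j hjs hne hcond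
        cases j with
        | none => exact Nat.succ_ne_zero m hcond.2.symm
        | some q =>
            obtain ⟨b', m'⟩ := q
            have hm : m' = m := Nat.succ_injective hcond.2
            have hb : b' = b := by
              have hc := hcond.1
              simp only [condI, Bool.and_eq_true, beq_iff_eq] at hc
              exact rIdx_inj hc.2.symm
            exact hne (by rw [hm, hb])
      · simp [condI]
  
end Inj

section Final
open StarRepAux

lemma Mtrue_Mtrue (v : E2) : Mtrue (Mtrue v) = 0 := by
  rw [Mtrue_apply, Mtrue_apply]
  have h1 : ((v 1 • ev 0 : E2)) 1 = v 1 * (ev 0 : E2) 1 := rfl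
  have h2 : (ev 0 : E2) 1 = 0 := by rw [ev, EuclideanSpace.single_apply]; simp
  rw [h1, h2, mul_zero, zero_smul]

lemma Mfalse_Mfalse (v : E2) : Mfalse (Mfalse v) = 0 := by
  rw [Mfalse_apply, Mfalse_apply]
  have h1 : ((v 0 • ev 1 : E2)) 0 = v 0 * (ev 1 : E2) 0 := rfl
  have h2 : (ev 1 : E2) 0 = 0 := by rw [ev, EuclideanSpace.single_apply]; simp
  rw [h1, h2, mul_zero, zero_smul]

lemma Xop_mul_Xop : Xop * Xop = 0 := by
  ext f n k
  show ((Xop (Xop f) : Hsp) : ∀ _ : ℕ, E2) n k = ((0 : Hsp) : ∀ _ : ℕ, E2) n k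
  erw [Xop, diagOp_apply_coord, diagOp_apply_coord]
  simp [ContinuousLinearMap.smul_apply, map_smul, Mtrue_Mtrue]

lemma Xst_mul_Xst : Xst * Xst = 0 := by
  ext f n k
  show ((Xst (Xst f) : Hsp) : ∀ _ : ℕ, E2) n k = ((0 : Hsp) : ∀ _ : ℕ, E2) n k
  erw [Xst, diagOp_apply_coord, diagOp_apply_coord]
  simp [ContinuousLinearMap.smul_apply, map_smul, Mfalse_Mfalse]

lemma piT_iota (b : Bool) : piT (FreeAlgebra.ι ℂ b) = opOf b := by
  rw [piT, FreeAlgebra.lift_ι_apply]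

lemma piT_compat : ∀ x y, relA x y → piT x = piT y := by
  rintro x y ⟨h1 | h1, h2⟩ <;> subst h2 <;> rw [h1, map_zero, map_pow, piT_iota, pow_two]
  · exact Xop_mul_Xop
  · exact Xst_mul_Xst

def piA : AlgA →ₐ[ℂ] (Hsp →L[ℂ] Hsp) := RingQuot.liftAlgHom ℂ ⟨piT, piT_compat⟩

lemma piA_mk (p : FreeAlgebra ℂ Bool) : piA (RingQuot.mkAlgHom ℂ relA p) = piT p := by
  rw [piA, RingQuot.liftAlgHom_mkAlgHom_apply]

lemma piA_genx : piA genx = Xop := by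
  rw [genx, piA_mk, piT_iota]
  rfl

lemma piA_genxstar : piA genxstar = Xst := by
  rw [genxstar, piA_mk, piT_iota]
  rfl

lemma Xst_adjoint : Xst = ContinuousLinearMap.adjoint Xop := by
  rw [ContinuousLinearMap.eq_adjoint_iff]
  intro x y
  rw [lp.inner_eq_tsum, lp.inner_eq_tsum]
  apply tsum_congr
  intro n
  have hx : ((Xst x : Hsp) : ∀ _ : ℕ, E2) n = tC n • Mfalse (x n) := rfl
  have hy : ((Xop y : Hsp) : ∀ _ : ℕ, E2) n = tC n • Mtrue (y n) := rfl
  rw [hx, hy, Mfalse_apply, Mtrue_apply]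
  simp only [ev, inner_smul_left, inner_smul_right, EuclideanSpace.inner_single_left,
    EuclideanSpace.inner_single_right, conj_tC, map_one, one_mul, mul_one]
  ring

lemma piA_inj : Function.Injective piA := by
  rw [injective_iff_map_eq_zero]
  intro a ha
  obtain ⟨p, rfl⟩ := RingQuot.mkAlgHom_surjective ℂ relA a
  have hmk := mk_embL_NF p
  have h2 : piT (embL (NF p)) = 0 := by
    calc piT (embL (NF p)) = piA (RingQuot.mkAlgHom ℂ relA (embL (NF p))) := (piA_mk _).symm
      _ = piA (RingQuot.mkAlgHom ℂ relA p) := by rw [hmk]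
      _ = 0 := ha
  have hc := c_eq_zero (NF p) h2
  calc RingQuot.mkAlgHom ℂ relA p = RingQuot.mkAlgHom ℂ relA (embL (NF p)) := hmk.symm
    _ = RingQuot.mkAlgHom ℂ relA (embL 0) := by rw [hc]
    _ = 0 := by rw [map_zero, map_zero]

lemma norm_Xop_le : ‖Xop‖ ≤ 1 := norm_diagOp_le _ _

end Final

/-- the *-algebra `A = ℂ⟨x, x* | x² = 0, x*² = 0⟩` admits a faithful
*-representation by bounded operators on a Hilbert space (the adjoint of the image of
`x` is the image of `x*`), and the representation can be chosen with `‖π(x)‖ ≤ 1`. -/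
theorem stmt10 :
    ∃ (H : Type) (_ : NormedAddCommGroup H) (_ : InnerProductSpace ℂ H)
      (_ : CompleteSpace H) (π : AlgA →ₐ[ℂ] (H →L[ℂ] H)),
      Function.Injective π ∧
      π genxstar = ContinuousLinearMap.adjoint (π genx) ∧
      ‖π genx‖ ≤ 1 := by
  refine ⟨StarRepAux.Hsp, inferInstance, inferInstance, inferInstance, piA,
    piA_inj, ?_, ?_⟩
  · rw [piA_genxstar, piA_genx]
    exact Xst_adjoint
  · rw [piA_genx]
    exact norm_Xop_le
end StarRepAux
end

section
/- Let u, v, w be words in a free monoid with u unshrinkable, and suppose p·u·q = w·w* where the occurrence of u crosses the middle of w·w* (i.e., |p| < |w| and |q| < |w|). Writing u = c·d with w = p·c and w* = d·q, if |c| ≤ |d| then u has prefix c·c*, and if |c| > |d| then u has suffix d*·d; in either case u is shrinkable—a contradiction. Hence an unshrinkable word cannot cross the middle of a positive word. -/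
lemma wordStar_ne_nil {n : ℕ} {a : List (Fin n ⊕ Fin n)} (h : a ≠ []) :
    wordStar a ≠ [] := by
  simp [wordStar, h]

/-- an unshrinkable word cannot cross the middle of a positive word:
if `u` is unshrinkable and `p·u·q = w·w*` with `|p| < |w|` and `|q| < |w|`,
then a contradiction follows. -/
theorem stmt15 {n : ℕ} (p u q w : List (Fin n ⊕ Fin n))
    (hu : ¬ Shrinkable u) (h : p ++ u ++ q = w ++ wordStar w)
    (hp : p.length < w.length) (hq : q.length < w.length) :
    False := by
  -- p is a prefix of w
  have hpw : p <+: w := by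
    have h1 : p <+: w ++ wordStar w := ⟨u ++ q, by simpa [List.append_assoc] using h⟩
    exact List.prefix_of_prefix_length_le h1 (List.prefix_append _ _) hp.le
  obtain ⟨c, hc⟩ := hpw
  have hc_ne : c ≠ [] := by
    rintro rfl; simp [← hc] at hp
  have huq : u ++ q = c ++ wordStar w := by
    have h' := h
    nth_rewrite 1 [← hc] at h'
    rw [List.append_assoc, List.append_assoc] at h'
    exact List.append_cancel_left h'
  -- q is a suffix of wordStar w
  have hqs : q <:+ wordStar w := by
    have h1 : q <:+ c ++ wordStar w := ⟨u, by simpa using huq⟩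
    refine List.suffix_of_suffix_length_le h1 (List.suffix_append _ _) ?_
    rw [wordStar_length]; exact hq.le
  obtain ⟨d, hd⟩ := hqs
  have hd_ne : d ≠ [] := by
    rintro rfl
    have := congrArg List.length hd
    simp [wordStar_length] at this
    omega
  have hu_cd : u = c ++ d := by
    have : u ++ q = (c ++ d) ++ q := by rw [huq, ← hd, List.append_assoc]
    exact List.append_cancel_right this
  -- d ++ q = wordStar c ++ wordStar p
  have hkey : d ++ q = wordStar c ++ wordStar p := by
    rw [hd, ← hc, wordStar_append]
  apply hu
  rcases le_or_gt c.length d.length with hle | hlt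
  · -- wordStar c is a prefix of d
    have h1 : wordStar c <+: d ++ q := ⟨wordStar p, hkey.symm⟩
    have h2 : wordStar c <+: d :=
      List.prefix_of_prefix_length_le h1 (List.prefix_append _ _)
        (by rw [wordStar_length]; exact hle)
    obtain ⟨g, hg⟩ := h2
    refine ⟨wordStar c, g, wordStar_ne_nil hc_ne, Or.inl ?_⟩
    rw [hu_cd, ← hg, wordStar_wordStar, List.append_assoc]
  · -- d is a prefix of wordStar c
    have h1 : d <+: wordStar c ++ wordStar p := ⟨q, hkey⟩
    have h2 : d <+: wordStar c :=
      List.prefix_of_prefix_length_le h1 (List.prefix_append _ _)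
        (by rw [wordStar_length]; exact hlt.le)
    obtain ⟨g, hg⟩ := h2
    refine ⟨d, wordStar g, hd_ne, Or.inr ?_⟩
    have hc_eq : c = wordStar g ++ wordStar d := by
      rw [← wordStar_wordStar c, ← hg, wordStar_append]
    rw [hu_cd, hc_eq, List.append_assoc]
end
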